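/- For every integer d ≥ 2, the map Φ : S^{d-2} → SC_d(2,0;o) defined by Φ(x) = ((x/2 + P_{1/4}, 1/4), (−x/2 + P_{1/4}, 1/4)) is well defined (both balls are contained in the closed upper unit semiball and are nonoverlapping), is a topological embedding, satisfies π_c(Φ(x)) = x for all x ∈ S^{d-2}, and is invariant under swapping the two balls followed by applying R_{d-1} to both centers: for all x ∈ S^{d-2}, ((R_{d-1}(−x/2 + P_{1/4}), 1/4), (R_{d-1}(x/2 + P_{1/4}), 1/4)) = Φ(x). -/

import Mathlib

noncomputable section

/-- The last index of `Fin d` (corresponding to the last coordinate `x_d`). -/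
def lastIdx (d : ℕ) (hd : 2 ≤ d) : Fin d := ⟨d - 1, by omega⟩

/-- The point `P_{1/4} = (0, …, 0, 1/4)` of `ℝ^d`. -/
def Pquarter (d : ℕ) (hd : 2 ≤ d) : EuclideanSpace ℝ (Fin d) :=
  EuclideanSpace.single (lastIdx d hd) 4⁻¹

/-- The composite `R_{d-1}` of the reflections `r_1, …, r_{d-1}`, i.e. the map negating
the first `d − 1` coordinates and keeping the last one. -/
def bigR (d : ℕ) (hd : 2 ≤ d) :
    EuclideanSpace ℝ (Fin d) → EuclideanSpace ℝ (Fin d) :=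
  fun x => -x + EuclideanSpace.single (lastIdx d hd) (2 * x (lastIdx d hd))

/-- The configuration space `SC_d(2,0;o)` of two nonoverlapping balls in the closed
upper unit semiball of `ℝ^d`. -/
def SC20o (d : ℕ) (hd : 2 ≤ d) :
    Set ((EuclideanSpace ℝ (Fin d) × ℝ) × (EuclideanSpace ℝ (Fin d) × ℝ)) :=
  {c | 0 < c.1.2 ∧ 0 < c.2.2 ∧
       c.1.1 (lastIdx d hd) ≥ c.1.2 ∧ c.2.1 (lastIdx d hd) ≥ c.2.2 ∧
       ‖c.1.1‖ + c.1.2 ≤ 1 ∧ ‖c.2.1‖ + c.2.2 ≤ 1 ∧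
       ‖c.1.1 - c.2.1‖ ≥ c.1.2 + c.2.2}

/-- The sphere `S^{d-2} = {z ∈ S^{d-1} : z_d = 0}` inside `ℝ^d`. -/
def sphereLast (d : ℕ) (hd : 2 ≤ d) : Set (EuclideanSpace ℝ (Fin d)) :=
  {z | ‖z‖ = 1 ∧ z (lastIdx d hd) = 0}

/-- The raw formula of the projection `π_c`, sending `((x,r),(y,s))` to `(x−y)/‖x−y‖`. -/
def rawPi (d : ℕ) :
    (EuclideanSpace ℝ (Fin d) × ℝ) × (EuclideanSpace ℝ (Fin d) × ℝ) →
      EuclideanSpace ℝ (Fin d) :=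
  fun c => ‖c.1.1 - c.2.1‖⁻¹ • (c.1.1 - c.2.1)

/-- The raw formula of `Φ = φ_o(f,f)`, sending `x` to
`((x/2 + P_{1/4}, 1/4), (−x/2 + P_{1/4}, 1/4))`. -/
def bigPhi (d : ℕ) (hd : 2 ≤ d) :
    EuclideanSpace ℝ (Fin d) →
      (EuclideanSpace ℝ (Fin d) × ℝ) × (EuclideanSpace ℝ (Fin d) × ℝ) :=
  fun x =>
    (((2 : ℝ)⁻¹ • x + Pquarter d hd, 4⁻¹), (-((2 : ℝ)⁻¹ • x) + Pquarter d hd, 4⁻¹))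

/-!
The centres `x/2 + P_{1/4}` and `-x/2 + P_{1/4}` of `Φ(x)` differ by `x`. Hence `π_c ∘ Φ` is the
identity on the unit sphere, and `c ↦ c.1.1 - c.2.1` is a continuous left inverse of `Φ` on all
of `ℝ^d`, which makes `Φ` an embedding. Since `x_d = 0`, both centres have height `1/4` and norm
at most `1/2 + 1/4`, and `R_{d-1}` acts on them as `v + P_{1/4} ↦ -v + P_{1/4}`, swapping them.
-/

namespace SwissCheese

variable {d : ℕ} {hd : 2 ≤ d}

lemma norm_Pquarter : ‖Pquarter d hd‖ = 4⁻¹ := by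
  simp [Pquarter]

lemma add_Pquarter_apply_lastIdx {v : EuclideanSpace ℝ (Fin d)} (hv : v (lastIdx d hd) = 0) :
    (v + Pquarter d hd) (lastIdx d hd) = 4⁻¹ := by
  simp [Pquarter, hv]

lemma norm_add_Pquarter_add_le {v : EuclideanSpace ℝ (Fin d)} (hv : ‖v‖ ≤ 2⁻¹) :
    ‖v + Pquarter d hd‖ + 4⁻¹ ≤ 1 := by
  have := norm_add_le v (Pquarter d hd)
  rw [norm_Pquarter] at this
  linarith

lemma bigR_add_Pquarter {v : EuclideanSpace ℝ (Fin d)} (hv : v (lastIdx d hd) = 0) :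
    bigR d hd (v + Pquarter d hd) = -v + Pquarter d hd := by
  have hsingle :
      EuclideanSpace.single (lastIdx d hd) ((2 : ℝ) * 4⁻¹) = (2 : ℝ) • Pquarter d hd := by
    ext j
    by_cases hj : j = lastIdx d hd <;> simp [Pquarter, hj]
  rw [bigR, add_Pquarter_apply_lastIdx hv, hsingle]
  module

variable (d hd)

lemma bigPhi_fst_sub_snd (x : EuclideanSpace ℝ (Fin d)) :
    (bigPhi d hd x).1.1 - (bigPhi d hd x).2.1 = x := by
  simp only [bigPhi]
  module

lemma rawPi_bigPhi {x : EuclideanSpace ℝ (Fin d)} (hx : ‖x‖ = 1) :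
    rawPi d (bigPhi d hd x) = x := by
  rw [rawPi, bigPhi_fst_sub_snd, hx, inv_one, one_smul]

lemma isEmbedding_bigPhi : Topology.IsEmbedding (bigPhi d hd) :=
  Function.LeftInverse.isEmbedding (f := fun c => c.1.1 - c.2.1)
    (fun x => bigPhi_fst_sub_snd d hd x)
    (by fun_prop) (by unfold bigPhi; fun_prop)

lemma bigPhi_mem_SC20o {x : EuclideanSpace ℝ (Fin d)} (hx : x ∈ sphereLast d hd) :
    bigPhi d hd x ∈ SC20o d hd := by
  obtain ⟨hx_norm, hx_last⟩ := hx
  have hv_last : ((2 : ℝ)⁻¹ • x) (lastIdx d hd) = 0 := by simp [hx_last]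
  have hv_norm : ‖(2 : ℝ)⁻¹ • x‖ = 2⁻¹ := by simp [norm_smul, hx_norm]
  refine ⟨by norm_num [bigPhi], by norm_num [bigPhi],
    (add_Pquarter_apply_lastIdx hv_last).ge,
    (add_Pquarter_apply_lastIdx (by simp [hv_last])).ge,
    norm_add_Pquarter_add_le hv_norm.le,
    norm_add_Pquarter_add_le (by rw [norm_neg, hv_norm]), ?_⟩
  rw [bigPhi_fst_sub_snd, hx_norm]
  norm_num [bigPhi]

end SwissCheese

open SwissCheese

/-- For every integer `d ≥ 2`, the map `Φ : S^{d-2} → SC_d(2,0;o)`,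
`x ↦ ((x/2 + P_{1/4}, 1/4), (−x/2 + P_{1/4}, 1/4))`, is well defined, is a topological
embedding, satisfies `π_c(Φ(x)) = x`, and is invariant under swapping the two balls
followed by applying `R_{d-1}` to both centers. -/
theorem swissCheese_bigPhi_embedding_invariant (d : ℕ) (hd : 2 ≤ d) :
    (∀ x ∈ sphereLast d hd, bigPhi d hd x ∈ SC20o d hd) ∧
    Topology.IsEmbedding (fun x : sphereLast d hd => bigPhi d hd x.1) ∧
    (∀ x ∈ sphereLast d hd, rawPi d (bigPhi d hd x) = x) ∧
    (∀ x ∈ sphereLast d hd,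
      ((bigR d hd (-((2 : ℝ)⁻¹ • x) + Pquarter d hd), (4⁻¹ : ℝ)),
       (bigR d hd ((2 : ℝ)⁻¹ • x + Pquarter d hd), (4⁻¹ : ℝ))) = bigPhi d hd x) := by
  refine ⟨fun x hx => bigPhi_mem_SC20o d hd hx,
    (isEmbedding_bigPhi d hd).comp .subtypeVal,
    fun x hx => rawPi_bigPhi d hd hx.1, fun x hx => ?_⟩
  have hx_last : ((2 : ℝ)⁻¹ • x) (lastIdx d hd) = 0 := by simp [hx.2]
  rw [bigR_add_Pquarter (by simp [hx_last]), bigR_add_Pquarter hx_last, neg_neg]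
  rfl
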